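/- arXiv:0803.0148 — 2 statements merged into one kernel-verified Lean document; each statement's English description precedes it below -/
import Mathlib

section
/- Let R be a positive totally ordered aura with tempered growth and |·| : ℤ → R a power-multiplicative seminorm. Then for all natural numbers m, n with m > 1 and n > 1, |m| ≤ max(1, |n|)^c, where c = 1 + ⌊log m / log n⌋ is one more than the largest integer k with n^k ≤ m. -/
/-!
Splitting off the last base-`n` digit, `m = n * (m / n) + m % n`, and inducting gives
`|m| ≤ n (log_n m + 1) M ^ log_n m` with `M = max 1 |n|`: the expected power of `M` up to a
factor polynomial in `log_n m`. Applied to `m ^ k`, power-multiplicativity turns this into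
`(|m| / M ^ (log_n m + 1)) ^ k ≤ n ((log_n m + 1) k + 1)`, and tempered growth removes the
polynomial factor.
-/

open Polynomial

theorem IsOrderedRing.of_mono {R : Type*} [Semiring R] [PartialOrder R]
    (hadd : ∀ x y z t : R, x ≤ z → y ≤ t → x + y ≤ z + t)
    (hmul : ∀ x y z t : R, x ≤ z → y ≤ t → x * y ≤ z * t) (h01 : (0 : R) ≤ 1) :
    IsOrderedRing R where
  add_le_add_left _ _ hab _ := hadd _ _ _ _ hab le_rfl
  zero_le_one := h01
  mul_le_mul_of_nonneg_left _ _ _ _ hbc := hmul _ _ _ _ le_rfl hbc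
  mul_le_mul_of_nonneg_right _ _ _ _ hbc := hmul _ _ _ _ hbc le_rfl

theorem zero_le_of_mul_mono {G₀ : Type*} [GroupWithZero G₀] [LinearOrder G₀]
    (hmul : ∀ x y z t : G₀, x ≤ z → y ≤ t → x * y ≤ z * t) (h01 : (0 : G₀) < 1) (x : G₀) :
    0 ≤ x := by
  by_contra! hx
  -- `1 = x * x⁻¹ ≤ 0 * max x⁻¹ 0`
  have : (1 : G₀) ≤ 0 := by
    simpa [hx.ne] using hmul x x⁻¹ 0 (max x⁻¹ 0) hx.le (le_max_left _ _)
  exact this.not_gt h01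

def TemperedGrowth (R : Type*) [Semiring R] [LE R] : Prop :=
  ∀ P : ℕ[X], P ≠ 0 → ∀ x : R, (∀ n : ℕ, x ^ n ≤ ((P.eval n : ℕ) : R)) → x ≤ 1

theorem TemperedGrowth.le_of_pow_le_mul_pow {R : Type*} [Semifield R] [LinearOrder R]
    [IsOrderedRing R] (h : TemperedGrowth R) {P : ℕ[X]} (hP : P ≠ 0) {x y : R} (hy : 0 < y)
    (hxy : ∀ k : ℕ, x ^ k ≤ ((P.eval k : ℕ) : R) * y ^ k) : x ≤ y := by
  have := MulPosMono.toMulPosReflectLT (α := R)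
  have := PosMulMono.toPosMulStrictMono (α := R)
  rw [← div_le_one₀ hy]
  refine h P hP _ fun k => ?_
  rw [div_pow, div_le_iff₀ (pow_pos hy k)]
  exact hxy k

theorem Nat.log_pow_le_succ_log_mul {b : ℕ} (hb : 1 < b) (m k : ℕ) :
    Nat.log b (m ^ k) ≤ (Nat.log b m + 1) * k := by
  have hm : m ^ k ≤ (b ^ (Nat.log b m + 1)) ^ k :=
    Nat.pow_le_pow_left (Nat.lt_pow_succ_log_self hb m).le k
  simpa only [← pow_mul, Nat.log_pow hb] using Nat.log_mono_right (b := b) hm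

section Seminorm

variable {R : Type*} {f : ℤ → R}

theorem apply_natCast_le_natCast [AddMonoidWithOne R] [Preorder R] [AddLeftMono R]
    [AddRightMono R] (hf0 : f 0 = 0) (hf1 : f 1 = 1)
    (hfa : ∀ a b : ℤ, f (a + b) ≤ f a + f b) (k : ℕ) : f k ≤ k := by
  induction k with
  | zero => simp [hf0]
  | succ k ih =>
    push_cast
    calc f (k + 1) ≤ f k + f 1 := hfa _ _
      _ ≤ k + 1 := add_le_add ih hf1.le

variable [CommSemiring R] [PartialOrder R] [IsOrderedRing R]

theorem apply_natCast_le_mul_pow_log (hf : ∀ a, 0 ≤ f a) (hf0 : f 0 = 0) (hf1 : f 1 = 1)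
    (hfm : ∀ a b : ℤ, f (a * b) ≤ f a * f b) (hfa : ∀ a b : ℤ, f (a + b) ≤ f a + f b)
    {n : ℕ} (hn : 1 < n) {M : R} (hM : 1 ≤ M) (hfn : f n ≤ M) (m : ℕ) :
    f m ≤ n * (Nat.log n m + 1) * M ^ Nat.log n m := by
  have hdigit : ∀ r ≤ n, f r ≤ n := fun r hr =>
    (apply_natCast_le_natCast hf0 hf1 hfa r).trans (Nat.mono_cast hr)
  induction m using Nat.strong_induction_on with
  | _ m ih =>
  rcases lt_or_ge m n with hmn | hnm
  · simpa [Nat.log_of_lt hmn] using hdigit m hmn.le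
  have hlog : Nat.log n m = Nat.log n (m / n) + 1 := by
    have := Nat.log_pos hn hnm
    rw [Nat.log_div_base]; omega
  have hq := ih (m / n) (Nat.div_lt_self (by omega) hn)
  set L := Nat.log n (m / n)
  have hM' : (1 : R) ≤ M ^ (L + 1) := one_le_pow₀ hM
  rw [hlog, ← Nat.div_add_mod m n]
  push_cast
  calc f (n * (m / n : ℕ) + (m % n : ℕ))
      ≤ f n * f (m / n : ℕ) + f (m % n : ℕ) := (hfa _ _).trans (add_le_add (hfm _ _) le_rfl)
    _ ≤ M * (n * (L + 1) * M ^ L) + n * 1 :=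
        add_le_add (mul_le_mul hfn hq (hf _) (zero_le_one.trans hM))
          (by simpa using hdigit _ (Nat.mod_lt m (by omega)).le)
    _ = n * (L + 1) * M ^ (L + 1) + n * 1 := by ring
    _ ≤ n * (L + 1) * M ^ (L + 1) + n * M ^ (L + 1) := by gcongr
    _ = n * (L + 1 + 1) * M ^ (L + 1) := by ring

end Seminorm

/-- For a tempered power-multiplicative seminorm `|·| : ℤ → R` and naturals
`m, n > 1`, one has `|m| ≤ max(1, |n|) ^ (⌊log m / log n⌋ + 1)`, where
`⌊log m / log n⌋ = Nat.log n m` is the largest `k` with `n ^ k ≤ m`. -/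
theorem tempered_powmult_log_bound
    {R : Type*} [Semifield R] [LinearOrder R]
    (hadd : ∀ x y z t : R, x ≤ z → y ≤ t → x + y ≤ z + t)
    (hmul : ∀ x y z t : R, x ≤ z → y ≤ t → x * y ≤ z * t)
    (hpos : (0 : R) < 1)
    (htemp : ∀ P : Polynomial ℕ, P ≠ 0 →
      ∀ x : R, (∀ n : ℕ, x ^ n ≤ ((P.eval n : ℕ) : R)) → x ≤ 1)
    (f : ℤ → R)
    (hf0 : f 0 = 0) (hf1 : f 1 = 1)
    (hfm : ∀ a b : ℤ, f (a * b) ≤ f a * f b)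
    (hfa : ∀ a b : ℤ, f (a + b) ≤ f a + f b)
    (hpm : ∀ (a : ℤ) (k : ℕ), f (a ^ k) = f a ^ k) :
    ∀ m n : ℕ, 1 < m → 1 < n →
      f (m : ℤ) ≤ max 1 (f (n : ℤ)) ^ (Nat.log n m + 1) := by
  intro m n _ hn
  have := IsOrderedRing.of_mono hadd hmul hpos.le
  have hf (a : ℤ) : 0 ≤ f a := zero_le_of_mul_mono hmul hpos (f a)
  set M := max 1 (f n)
  have hM : 1 ≤ M := le_max_left _ _
  set L := Nat.log n m
  set P : ℕ[X] := C n * (C (L + 1) * X + 1)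
  have hP (k : ℕ) : P.eval k = n * ((L + 1) * k + 1) := by simp [P]
  have hP0 : P ≠ 0 := fun h => by
    have := hP 0
    simp only [h, eval_zero, mul_zero, zero_add, mul_one] at this
    omega
  refine TemperedGrowth.le_of_pow_le_mul_pow htemp hP0
    (zero_lt_one.trans_le (one_le_pow₀ hM)) fun k => ?_
  calc f m ^ k = f (m ^ k : ℕ) := by push_cast; rw [hpm]
    _ ≤ n * (Nat.log n (m ^ k) + 1) * M ^ Nat.log n (m ^ k) :=
        apply_natCast_le_mul_pow_log hf hf0 hf1 hfm hfa hn hM (le_max_right _ _) _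
    _ ≤ n * (((L + 1) * k : ℕ) + 1) * M ^ ((L + 1) * k) := by
        have := Nat.log_pow_le_succ_log_mul hn m k
        gcongr
    _ = ((P.eval k : ℕ) : R) * (M ^ (L + 1)) ^ k := by
        rw [hP, ← pow_mul]; push_cast; ring
end

section
/- Let R be a positive totally ordered aura with tempered growth and |·| a power-multiplicative seminorm on the polynomial ring ℂ[X] whose restriction to the constants ℂ is multiplicatively equivalent to the usual complex absolute value, in the sense that for all λ, μ, ν ∈ ℂ one has ‖λ‖·‖ν‖ ≤ ‖μ‖ if and only if |λ|·|ν| ≤ |μ| (values taken at constant polynomials). Then |·| is upper bounded (i.e., for every nonzero P ∈ ℂ[X] there exists a nonzero rational number λ with |P| ≤ |λ|, the value at the constant polynomial λ) if and only if there exist a ∈ ℂ and a nonzero integer n such that |X − a| ≤ |n| (values at the polynomial X − a and at the constant polynomial n). -/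
/-! Expanding `P` around `a` as `P = ∑ qⱼ (X - a)ʲ` bounds `|P|` by `(deg P + 1)` times `|c|`
for a suitable constant `c`, because `|(X - a)ʲ| ≤ |n|ʲ`. Applied to `Pᵏ`, whose Taylor
coefficients grow at most exponentially in `k` (the Mahler measure is multiplicative), this
gives `|P|ᵏ ≤ (k · deg P + 1) |c|ᵏ`, and tempered growth removes the polynomial factor.
Conversely, a rational bound on `|X|` is dominated by an integer one. -/

open Polynomial

section OrderedSemifield

variable {R : Type*} [Semifield R] [LinearOrder R]

theorem IsOrderedRing.of_add_le_add_of_mul_le_mul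
    (hadd : ∀ x y z t : R, x ≤ z → y ≤ t → x + y ≤ z + t)
    (hmul : ∀ x y z t : R, x ≤ z → y ≤ t → x * y ≤ z * t) (hpos : (0 : R) < 1) :
    IsOrderedRing R where
  add_le_add_left _ _ h _ := hadd _ _ _ _ h le_rfl
  zero_le_one := hpos.le
  mul_le_mul_of_nonneg_left _ _ _ _ h := hmul _ _ _ _ le_rfl h
  mul_le_mul_of_nonneg_right _ _ _ _ h := hmul _ _ _ _ h le_rfl

theorem nonneg_of_mul_le_mul (hmul : ∀ x y z t : R, x ≤ z → y ≤ t → x * y ≤ z * t)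
    (hpos : (0 : R) < 1) (x : R) : 0 ≤ x := by
  simpa using hmul x 0 x 1 le_rfl hpos.le

def HasTemperedGrowth (R : Type*) [Semiring R] [LE R] : Prop :=
  ∀ P : ℕ[X], P ≠ 0 → ∀ x : R, (∀ n : ℕ, x ^ n ≤ ((P.eval n : ℕ) : R)) → x ≤ 1

theorem HasTemperedGrowth.le_of_pow_le_eval_mul_pow [IsOrderedRing R]
    (htemp : HasTemperedGrowth R) (hR : ∀ x : R, 0 ≤ x) {P : ℕ[X]} (hP : P ≠ 0) {x c : R}
    (hc : c ≠ 0) (h : ∀ n : ℕ, x ^ n ≤ ((P.eval n : ℕ) : R) * c ^ n) : x ≤ c := by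
  have hxc : x * c⁻¹ ≤ 1 := htemp P hP _ fun n => by
    simpa [mul_pow, hc] using mul_le_mul_of_nonneg_right (h n) (hR (c ^ n)⁻¹)
  calc x = x * c⁻¹ * c := by field_simp
    _ ≤ 1 * c := mul_le_mul_of_nonneg_right hxc (hR c)
    _ = c := one_mul c

end OrderedSemifield

structure IsPowMulSeminorm {A R : Type*} [CommRing A] [Semiring R] [LE R] (f : A → R) :
    Prop where
  map_zero : f 0 = 0
  map_one : f 1 = 1
  map_mul_le : ∀ a b, f (a * b) ≤ f a * f b
  map_add_le : ∀ a b, f (a + b) ≤ f a + f b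
  map_pow : ∀ a (n : ℕ), f (a ^ n) = f a ^ n

theorem Polynomial.norm_coeff_pow_le (p : ℂ[X]) (n j : ℕ) :
    ‖(p ^ n).coeff j‖ ≤ (2 ^ p.natDegree * p.mahlerMeasure) ^ n := by
  have hM : (p ^ n).mahlerMeasure = p.mahlerMeasure ^ n := by
    simpa using prod_mahlerMeasure_eq_mahlerMeasure_prod (Multiset.replicate n p)
  have hchoose : ((p ^ n).natDegree.choose j : ℝ) ≤ 2 ^ (n * p.natDegree) := by
    exact_mod_cast (Nat.choose_le_two_pow _ _).trans
      (Nat.pow_le_pow_right two_pos natDegree_pow_le)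
  calc ‖(p ^ n).coeff j‖ ≤ (p ^ n).natDegree.choose j * (p ^ n).mahlerMeasure :=
        norm_coeff_le_choose_mul_mahlerMeasure j _
    _ ≤ 2 ^ (n * p.natDegree) * p.mahlerMeasure ^ n := by
        rw [hM]; gcongr; exact pow_nonneg (mahlerMeasure_nonneg p) n
    _ = (2 ^ p.natDegree * p.mahlerMeasure) ^ n := by rw [mul_pow, ← pow_mul, mul_comm n]

section ConstantPolynomials

variable {R : Type*} [Semifield R] [LinearOrder R] {f : ℂ[X] → R}

def IsMulEquivalentToNormOnC (f : ℂ[X] → R) : Prop :=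
  ∀ lam mu nu : ℂ, ‖lam‖ * ‖nu‖ ≤ ‖mu‖ ↔ f (C lam) * f (C nu) ≤ f (C mu)

theorem IsPowMulSeminorm.map_C_le_map_C (hf : IsPowMulSeminorm f) (hC : IsMulEquivalentToNormOnC f)
    {a b : ℂ} (h : ‖a‖ ≤ ‖b‖) : f (C a) ≤ f (C b) := by
  simpa [hf.map_one] using (hC a b 1).mp (by simpa using h)

theorem IsPowMulSeminorm.map_C_mul (hf : IsPowMulSeminorm f) (hC : IsMulEquivalentToNormOnC f)
    (a b : ℂ) : f (C (a * b)) = f (C a) * f (C b) :=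
  le_antisymm (by simpa only [C_mul] using hf.map_mul_le _ _)
    ((hC a (a * b) b).mp (norm_mul a b).ge)

theorem IsPowMulSeminorm.map_C_ne_zero (hf : IsPowMulSeminorm f) (hC : IsMulEquivalentToNormOnC f)
    {a : ℂ} (ha : a ≠ 0) : f (C a) ≠ 0 := by
  intro h0
  have h1 := hf.map_C_mul hC a a⁻¹
  rw [mul_inv_cancel₀ ha, C_1, hf.map_one, h0, zero_mul] at h1
  exact one_ne_zero h1

variable [IsOrderedRing R]

theorem IsPowMulSeminorm.map_C_mul_X_sub_C_pow_le (hR : ∀ x : R, 0 ≤ x)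
    (hf : IsPowMulSeminorm f) (hC : IsMulEquivalentToNormOnC f) {a r : ℂ}
    (hXa : f (X - C a) ≤ f (C r)) (e : ℂ) (j : ℕ) :
    f (C e * (X - C a) ^ j) ≤ f (C (e * r ^ j)) :=
  calc f (C e * (X - C a) ^ j)
      ≤ f (C e) * f (X - C a) ^ j := by rw [← hf.map_pow]; exact hf.map_mul_le _ _
    _ ≤ f (C e) * f (C r) ^ j :=
        mul_le_mul_of_nonneg_left (pow_le_pow_left₀ (hR _) hXa j) (hR _)
    _ = f (C (e * r ^ j)) := by rw [hf.map_C_mul hC, C_pow, hf.map_pow]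

theorem IsPowMulSeminorm.map_pow_le_of_map_X_sub_C_le (hR : ∀ x : R, 0 ≤ x)
    (hf : IsPowMulSeminorm f) (hC : IsMulEquivalentToNormOnC f)
    {a r : ℂ} (hr : 1 ≤ ‖r‖) (hXa : f (X - C a) ≤ f (C r)) (P : ℂ[X]) {c : ℂ}
    (hc : 2 ^ P.natDegree * (taylor a P).mahlerMeasure * ‖r‖ ^ P.natDegree ≤ ‖c‖) (n : ℕ) :
    f (P ^ n) ≤ ((n * P.natDegree + 1 : ℕ) : R) * f (C c) ^ n := by
  set d := P.natDegree
  set Q := taylor a P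
  have hterm : ∀ j ∈ Finset.range (n * d + 1),
      f (C ((Q ^ n).coeff j) * (X - C a) ^ j) ≤ f (C c) ^ n := by
    intro j hj
    have hjd : j ≤ n * d := Nat.lt_succ_iff.mp (Finset.mem_range.mp hj)
    have hQ := Q.mahlerMeasure_nonneg
    have hnorm : ‖(Q ^ n).coeff j * r ^ j‖ ≤ ‖c ^ n‖ := by
      rw [norm_mul, norm_pow, norm_pow]
      calc ‖(Q ^ n).coeff j‖ * ‖r‖ ^ j
          ≤ (2 ^ Q.natDegree * Q.mahlerMeasure) ^ n * ‖r‖ ^ (n * d) :=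
            mul_le_mul (Q.norm_coeff_pow_le n j) (pow_le_pow_right₀ hr hjd) (by positivity)
              (by positivity)
        _ = (2 ^ d * Q.mahlerMeasure * ‖r‖ ^ d) ^ n := by
            rw [natDegree_taylor, mul_pow _ (‖r‖ ^ d), ← pow_mul, mul_comm d]
        _ ≤ ‖c‖ ^ n := by gcongr
    exact (hf.map_C_mul_X_sub_C_pow_le hR hC hXa _ j).trans
      ((hf.map_C_le_map_C hC hnorm).trans_eq (by rw [C_pow, hf.map_pow]))
  have htaylor :
      P ^ n = ∑ j ∈ Finset.range (n * d + 1), C ((Q ^ n).coeff j) * (X - C a) ^ j := by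
    conv_lhs => rw [← sum_taylor_eq (P ^ n) a, taylor_pow]
    refine sum_over_range' _ (by simp) _ (Nat.lt_succ_of_le ?_)
    exact natDegree_pow_le.trans (by rw [natDegree_taylor])
  calc f (P ^ n)
        ≤ ∑ j ∈ Finset.range (n * d + 1), f (C ((Q ^ n).coeff j) * (X - C a) ^ j) := by
        rw [htaylor]; exact Finset.le_sum_of_subadditive f hf.map_zero.le hf.map_add_le _ _
    _ ≤ (n * d + 1) • f (C c) ^ n := by
        simpa using Finset.sum_le_card_nsmul _ _ _ hterm
    _ = ((n * d + 1 : ℕ) : R) * f (C c) ^ n := nsmul_eq_mul _ _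

theorem IsPowMulSeminorm.exists_map_le_map_natCast_of_map_X_sub_C_le
    (htemp : HasTemperedGrowth R) (hR : ∀ x : R, 0 ≤ x)
    (hf : IsPowMulSeminorm f) (hC : IsMulEquivalentToNormOnC f)
    {a r : ℂ} (hr : 1 ≤ ‖r‖) (hXa : f (X - C a) ≤ f (C r)) (P : ℂ[X]) :
    ∃ N : ℕ, N ≠ 0 ∧ f P ≤ f (C (N : ℂ)) := by
  set B := 2 ^ P.natDegree * (taylor a P).mahlerMeasure * ‖r‖ ^ P.natDegree
  have hB : B ≤ ‖((⌈B⌉₊ + 1 : ℕ) : ℂ)‖ := by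
    rw [Complex.norm_natCast]
    push_cast
    exact (Nat.le_ceil B).trans (le_add_of_nonneg_right zero_le_one)
  refine ⟨⌈B⌉₊ + 1, by omega, htemp.le_of_pow_le_eval_mul_pow hR (P := C P.natDegree * X + 1)
    (fun h0 => by simpa using congrArg (coeff · 0) h0)
    (hf.map_C_ne_zero hC (by exact_mod_cast (⌈B⌉₊).succ_ne_zero)) fun n => ?_⟩
  simpa [← hf.map_pow, mul_comm] using hf.map_pow_le_of_map_X_sub_C_le hR hC hr hXa P hB n

end ConstantPolynomials

open Polynomial in
/-- A tempered power-multiplicative seminorm on `ℂ[X]` whose restriction to the constants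
is multiplicatively equivalent to the complex absolute value is upper bounded if and only
if `|X - a| ≤ |n|` for some `a ∈ ℂ` and some nonzero integer `n`. -/
theorem upper_bounded_iff_monomial_bounded
    {R : Type*} [Semifield R] [LinearOrder R]
    (hadd : ∀ x y z t : R, x ≤ z → y ≤ t → x + y ≤ z + t)
    (hmul : ∀ x y z t : R, x ≤ z → y ≤ t → x * y ≤ z * t)
    (hpos : (0 : R) < 1)
    (htemp : ∀ P : Polynomial ℕ, P ≠ 0 →
      ∀ x : R, (∀ n : ℕ, x ^ n ≤ ((P.eval n : ℕ) : R)) → x ≤ 1)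
    (f : Polynomial ℂ → R)
    (hf0 : f 0 = 0) (hf1 : f 1 = 1)
    (hfm : ∀ P Q : Polynomial ℂ, f (P * Q) ≤ f P * f Q)
    (hfa : ∀ P Q : Polynomial ℂ, f (P + Q) ≤ f P + f Q)
    (hpm : ∀ (P : Polynomial ℂ) (n : ℕ), f (P ^ n) = f P ^ n)
    (hC : ∀ lam mu nu : ℂ, ‖lam‖ * ‖nu‖ ≤ ‖mu‖ ↔
      f (C lam) * f (C nu) ≤ f (C mu)) :
    (∀ P : Polynomial ℂ, P ≠ 0 → ∃ lam : ℚ, lam ≠ 0 ∧ f P ≤ f (C (lam : ℂ))) ↔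
      ∃ (a : ℂ) (n : ℤ), n ≠ 0 ∧ f (X - C a) ≤ f (C (n : ℂ)) := by
  have := IsOrderedRing.of_add_le_add_of_mul_le_mul hadd hmul hpos
  have hR := nonneg_of_mul_le_mul hmul hpos
  have hf : IsPowMulSeminorm f := ⟨hf0, hf1, hfm, hfa, hpm⟩
  constructor
  · intro hbdd
    obtain ⟨lam, -, hX⟩ := hbdd X X_ne_zero
    obtain ⟨n, hn⟩ := exists_nat_gt ‖(lam : ℂ)‖
    refine ⟨0, n, by exact_mod_cast (norm_nonneg _).trans_lt hn |>.ne', ?_⟩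
    rw [C_0, sub_zero]
    exact hX.trans (hf.map_C_le_map_C hC (by simpa using hn.le))
  · rintro ⟨a, n, hn, hXa⟩ P -
    have hr : 1 ≤ ‖(n : ℂ)‖ := by
      rw [Complex.norm_intCast]; exact_mod_cast Int.one_le_abs hn
    obtain ⟨N, hN, hP⟩ := hf.exists_map_le_map_natCast_of_map_X_sub_C_le htemp hR hC hr hXa P
    exact ⟨N, by exact_mod_cast hN, by exact_mod_cast hP⟩
end
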